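/- arXiv:1506.02812 — 2 statements merged into one kernel-verified Lean document; each statement's English description precedes it below -/
import Mathlib

section
/- For two central soft sets (f, A) and (g, B) over a common universe U, the central soft information order (f, A) ⊑ (g, B) holds if and only if (f, A) ⊓ (g, B) = (f, A). -/
/-! Both equations unfold to the same condition: `A ⊆ B`, and `f e ⊆ g e` at every parameter
`e ∉ B \ A`. This includes parameters outside `A ∪ B`, where both operations still combine
`f e` and `g e` pointwise. -/

open Classical

/-- A central soft set over a universe `U` with parameter set `E`:
a mapping `f : E → Set U` together with a central set `A ⊆ E`. -/
structure CSS (E U : Type*) where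
  f : E → Set U
  A : Set E

/-- Union of central soft sets. -/
noncomputable def cssUnion {E U : Type*} (s t : CSS E U) : CSS E U where
  f := fun e =>
    if e ∈ s.A \ t.A then s.f e
    else if e ∈ t.A \ s.A then t.f e
    else s.f e ∪ t.f e
  A := s.A ∪ t.A

/-- Intersection of central soft sets. -/
noncomputable def cssInter {E U : Type*} (s t : CSS E U) : CSS E U where
  f := fun e =>
    if e ∈ s.A \ t.A then t.f e
    else if e ∈ t.A \ s.A then s.f e
    else s.f e ∩ t.f e
  A := s.A ∩ t.A

/-- Complement of a central soft set. -/
def cssCompl {E U : Type*} (s : CSS E U) : CSS E U where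
  f := fun e => (s.f e)ᶜ
  A := s.Aᶜ

/-- Difference of central soft sets: `s − t = s ⊓ tᶜ`. -/
noncomputable def cssDiff {E U : Type*} (s t : CSS E U) : CSS E U :=
  cssInter s (cssCompl t)

/-- The central soft information order: `s ⊑ t` iff `s ⊔ t = t`. -/
def cssLE {E U : Type*} (s t : CSS E U) : Prop := cssUnion s t = t

/-- Projection of a central soft set over a set `B` of parameters
(the mapping is unchanged, the central set becomes `B`). -/
def cssProj {E U : Type*} (s : CSS E U) (B : Set E) : CSS E U where
  f := s.f
  A := B

/-- Supremum of a family of central soft sets. -/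
noncomputable def cssSup {E U ι : Type*} (F : ι → CSS E U) : CSS E U where
  f := fun e =>
    if {i : ι | e ∈ (F i).A}.Nonempty then ⋃ i ∈ {i : ι | e ∈ (F i).A}, (F i).f e
    else ⋃ i, (F i).f e
  A := ⋃ i, (F i).A

theorem cssLE_iff {E U : Type*} (s t : CSS E U) :
    cssLE s t ↔ s.A ⊆ t.A ∧ ∀ e ∉ t.A \ s.A, s.f e ⊆ t.f e := by
  obtain ⟨f, A⟩ := s
  obtain ⟨g, B⟩ := t
  simp only [cssLE, cssUnion, CSS.mk.injEq, Set.union_eq_right, funext_iff]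
  rw [and_comm]
  refine and_congr_right fun hAB => forall_congr' fun e => ?_
  have he_notMem : e ∉ A \ B := fun he => he.2 (hAB he.1)
  by_cases he : e ∈ B \ A <;> simp [he_notMem, he]

theorem cssInter_eq_left_iff {E U : Type*} (s t : CSS E U) :
    cssInter s t = s ↔ s.A ⊆ t.A ∧ ∀ e ∉ t.A \ s.A, s.f e ⊆ t.f e := by
  obtain ⟨f, A⟩ := s
  obtain ⟨g, B⟩ := t
  simp only [cssInter, CSS.mk.injEq, Set.inter_eq_left, funext_iff]
  rw [and_comm]
  refine and_congr_right fun hAB => forall_congr' fun e => ?_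
  have he_notMem : e ∉ A \ B := fun he => he.2 (hAB he.1)
  by_cases he : e ∈ B \ A <;> simp [he_notMem, he]

theorem stmt3 {E U : Type*} (f g : E → Set U) (A B : Set E) :
    cssLE (⟨f, A⟩ : CSS E U) ⟨g, B⟩ ↔ cssInter (⟨f, A⟩ : CSS E U) ⟨g, B⟩ = ⟨f, A⟩ :=
  (cssLE_iff _ _).trans (cssInter_eq_left_iff _ _).symm
end

section
/- Intersection distributes over union for central soft sets: for central soft sets (f, A), (g, B), and (h, C) over a common universe U, (f, A) ⊓ [(g, B) ⊔ (h, C)] = [(f, A) ⊓ (g, B)] ⊔ [(f, A) ⊓ (h, C)]. -/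
/-! Both sides have central set `A ∩ (B ∪ C)`. Pointwise, the value at a parameter `e` depends only
on which of `A`, `B`, `C` contain `e`; in each of the eight cases both sides reduce to the same
expression in `f e`, `g e`, `h e`, by distributivity of `∩` over `∪` when `e ∈ A ∩ B ∩ C` and by
absorption or directly otherwise. -/

open Classical

attribute [ext] CSS

section MembershipCases

variable {E U : Type*} {s t : CSS E U} {e : E}

@[simp]
theorem cssUnion_A : (cssUnion s t).A = s.A ∪ t.A := rfl

@[simp]
theorem cssInter_A : (cssInter s t).A = s.A ∩ t.A := rfl

theorem cssUnion_f_of_mem_of_notMem (hs : e ∈ s.A) (ht : e ∉ t.A) :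
    (cssUnion s t).f e = s.f e := by
  simp [cssUnion, hs, ht]

theorem cssUnion_f_of_notMem_of_mem (hs : e ∉ s.A) (ht : e ∈ t.A) :
    (cssUnion s t).f e = t.f e := by
  simp [cssUnion, hs, ht]

theorem cssUnion_f_of_mem_iff (h : e ∈ s.A ↔ e ∈ t.A) :
    (cssUnion s t).f e = s.f e ∪ t.f e := by
  by_cases hs : e ∈ s.A <;> simp [cssUnion, hs, ← h]

theorem cssInter_f_of_mem_of_notMem (hs : e ∈ s.A) (ht : e ∉ t.A) :
    (cssInter s t).f e = t.f e := by
  simp [cssInter, hs, ht]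

theorem cssInter_f_of_notMem_of_mem (hs : e ∉ s.A) (ht : e ∈ t.A) :
    (cssInter s t).f e = s.f e := by
  simp [cssInter, hs, ht]

theorem cssInter_f_of_mem_iff (h : e ∈ s.A ↔ e ∈ t.A) :
    (cssInter s t).f e = s.f e ∩ t.f e := by
  by_cases hs : e ∈ s.A <;> simp [cssInter, hs, ← h]

end MembershipCases

theorem stmt11 {E U : Type*} (s t u : CSS E U) :
    cssInter s (cssUnion t u) = cssUnion (cssInter s t) (cssInter s u) := by
  ext : 1
  · funext e
    by_cases hs : e ∈ s.A <;> by_cases ht : e ∈ t.A <;> by_cases hu : e ∈ u.A <;>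
      grind [cssUnion_A, cssInter_A, cssUnion_f_of_mem_of_notMem, cssUnion_f_of_notMem_of_mem,
        cssUnion_f_of_mem_iff, cssInter_f_of_mem_of_notMem, cssInter_f_of_notMem_of_mem,
        cssInter_f_of_mem_iff]
  · exact Set.inter_union_distrib_left s.A t.A u.A
end
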